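/- arXiv:1905.11197 — 7 statements merged into one kernel-verified Lean document; each statement's English description precedes it below -/
import Mathlib

section
/- For every k ∈ ℕ and every z ∈ ρ(E,A), the resolvent maps the Wong sequence forward: (zE+A)^{-1}E[IV_k] ⊆ IV_{k+1}. -/
open Set Filter Topology MeasureTheory

variable {X Y : Type*} [NormedAddCommGroup X] [NormedSpace ℂ X]
  [NormedAddCommGroup Y] [NormedSpace ℂ Y]

/-- The Wong sequence associated with `(E, A)`: `IV 0 = dom A`, `IV (k+1) = A⁻¹[E[IV k]]`. -/
def WongSeq (E : X →L[ℂ] Y) (A : X →ₗ.[ℂ] Y) : ℕ → Set X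
  | 0 => (A.domain : Set X)
  | k + 1 => {x | ∃ hx : x ∈ A.domain, A ⟨x, hx⟩ ∈ E '' WongSeq E A k}

/-- `R` is the bounded inverse of `z E + A`. -/
def IsResolventAt (E : X →L[ℂ] Y) (A : X →ₗ.[ℂ] Y) (z : ℂ) (R : Y →L[ℂ] X) : Prop :=
  (∀ y : Y, ∃ h : R y ∈ A.domain, z • E (R y) + A ⟨R y, h⟩ = y) ∧
  ∀ x, ∀ hx : x ∈ A.domain, R (z • E x + A ⟨x, hx⟩) = x

/-- The resolvent set `ρ(E,A)`. -/
def ResolventSet (E : X →L[ℂ] Y) (A : X →ₗ.[ℂ] Y) : Set ℂ :=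
  {z | ∃ R : Y →L[ℂ] X, IsResolventAt E A z R}

/-- Mild solution of `(Eu)' + Au = 0`, `u 0 = u₀`. -/
def IsMildSolution (E : X →L[ℂ] Y) (A : X →ₗ.[ℂ] Y) (u₀ : X) (u : ℝ → X) : Prop :=
  ContinuousOn u (Set.Ici 0) ∧ u 0 = u₀ ∧
  ∀ t : ℝ, 0 < t → ∃ h : (∫ s in (0:ℝ)..t, u s) ∈ A.domain,
    E (u t) + A ⟨∫ s in (0:ℝ)..t, u s, h⟩ = E u₀

/-- Classical solution of `(Eu)' + Au = 0`, `u 0 = u₀`. -/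
def IsClassicalSolution (E : X →L[ℂ] Y) (A : X →ₗ.[ℂ] Y) (u₀ : X) (u : ℝ → X) : Prop :=
  ∃ u' : ℝ → X, ContinuousOn u' (Set.Ici 0) ∧
    (∀ t ∈ Set.Ici (0:ℝ), HasDerivWithinAt u (u' t) (Set.Ici 0) t) ∧
    u 0 = u₀ ∧
    ∀ t ∈ Set.Ici (0:ℝ), ∃ h : u t ∈ A.domain, E (u' t) + A ⟨u t, h⟩ = 0

/-- The pencil `(E,A)` has a polynomially bounded resolvent of order `k`
on the half plane `Re z ≥ ρ₀`. -/
def PolyBoundOrder (E : X →L[ℂ] Y) (A : X →ₗ.[ℂ] Y) (ρ₀ : ℝ) (k : ℕ) : Prop :=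
  ∃ C : ℝ, 0 ≤ C ∧ ∀ z : ℂ, ρ₀ ≤ z.re →
    ∃ R : Y →L[ℂ] X, IsResolventAt E A z R ∧ ‖R‖ ≤ C * ‖z‖ ^ k

lemma wongSeq_smul (E : X →L[ℂ] Y) (A : X →ₗ.[ℂ] Y) (c : ℂ) :
    ∀ k, ∀ x ∈ WongSeq E A k, c • x ∈ WongSeq E A k := by
  intro k
  induction k with
  | zero => intro x hx; exact A.domain.smul_mem c hx
  | succ k ih =>
    rintro x ⟨hx, w, hw, hEw⟩
    refine ⟨A.domain.smul_mem c hx, c • w, ih w hw, ?_⟩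
    have : A (c • (⟨x, hx⟩ : A.domain)) = c • A ⟨x, hx⟩ := A.map_smul c ⟨x, hx⟩
    simpa [hEw] using this.symm

lemma wongSeq_sub (E : X →L[ℂ] Y) (A : X →ₗ.[ℂ] Y) :
    ∀ k, ∀ x ∈ WongSeq E A k, ∀ y ∈ WongSeq E A k, x - y ∈ WongSeq E A k := by
  intro k
  induction k with
  | zero => intro x hx y hy; exact A.domain.sub_mem hx hy
  | succ k ih =>
    rintro x ⟨hx, w, hw, hEw⟩ y ⟨hy, v, hv, hEv⟩
    refine ⟨A.domain.sub_mem hx hy, w - v, ih w hw v hv, ?_⟩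
    have : A ((⟨x, hx⟩ : A.domain) - ⟨y, hy⟩) = A ⟨x, hx⟩ - A ⟨y, hy⟩ :=
      A.map_sub ⟨x, hx⟩ ⟨y, hy⟩
    have h2 : ((⟨x, hx⟩ : A.domain) - ⟨y, hy⟩) = ⟨x - y, A.domain.sub_mem hx hy⟩ := rfl
    simpa [hEw, hEv, h2] using this.symm

lemma wongSeq_succ_subset (E : X →L[ℂ] Y) (A : X →ₗ.[ℂ] Y) :
    ∀ k, WongSeq E A (k + 1) ⊆ WongSeq E A k := by
  intro k
  induction k with
  | zero => rintro x ⟨hx, _⟩; exact hx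
  | succ k ih =>
    rintro x ⟨hx, w, hw, hEw⟩
    exact ⟨hx, w, ih hw, hEw⟩

/-- the resolvent maps the Wong sequence forward. -/
theorem resolvent_maps_wongSeq (E : X →L[ℂ] Y) (A : X →ₗ.[ℂ] Y)
    (hdense : Dense (A.domain : Set X)) (hclosed : IsClosed (A.graph : Set (X × Y)))
    (k : ℕ) (z : ℂ) (R : Y →L[ℂ] X) (hR : IsResolventAt E A z R) :
    ∀ x ∈ WongSeq E A k, R (E x) ∈ WongSeq E A (k + 1) := by
  induction k with
  | zero =>
    intro x hx
    obtain ⟨h, heq⟩ := hR.1 (E x)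
    refine ⟨h, x - z • R (E x), A.domain.sub_mem hx (A.domain.smul_mem z h), ?_⟩
    rw [map_sub, E.map_smul]
    exact sub_eq_of_eq_add' heq.symm
  | succ k ih =>
    intro x hx
    have hRk : R (E x) ∈ WongSeq E A (k + 1) := ih x (wongSeq_succ_subset E A k hx)
    obtain ⟨h, heq⟩ := hR.1 (E x)
    refine ⟨h, x - z • R (E x),
      wongSeq_sub E A (k + 1) x hx _ (wongSeq_smul E A z (k + 1) _ hRk), ?_⟩
    rw [map_sub, E.map_smul]
    exact sub_eq_of_eq_add' heq.symm
end

section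
/- For every k ∈ ℕ and every x ∈ IV_k, there exist x_1, …, x_k ∈ X and x_{k+1} ∈ dom(A) such that for all z ∈ ρ(E,A) with z ≠ 0: (zE+A)^{-1}Ex = (1/z)x + Σ_{ℓ=1}^{k} z^{-(ℓ+1)} x_ℓ + z^{-(k+1)} (zE+A)^{-1} A x_{k+1}. -/
open Set Filter Topology MeasureTheory

variable {X Y : Type*} [NormedAddCommGroup X] [NormedSpace ℂ X]
  [NormedAddCommGroup Y] [NormedSpace ℂ Y]

private lemma aux_resolvent (E : X →L[ℂ] Y) (A : X →ₗ.[ℂ] Y) {z : ℂ} {R : Y →L[ℂ] X}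
    (hR : IsResolventAt E A z R) (hz : z ≠ 0) (x : X) (hx : x ∈ A.domain) :
    R (E x) = z⁻¹ • x - z⁻¹ • R (A ⟨x, hx⟩) := by
  have h := hR.2 x hx
  rw [map_add, R.map_smul] at h
  have h2 : z • R (E x) = x - R (A ⟨x, hx⟩) := eq_sub_of_add_eq h
  calc R (E x) = z⁻¹ • (z • R (E x)) := by
        rw [smul_smul, inv_mul_cancel₀ hz, one_smul]
    _ = z⁻¹ • (x - R (A ⟨x, hx⟩)) := by rw [h2]
    _ = z⁻¹ • x - z⁻¹ • R (A ⟨x, hx⟩) := smul_sub _ _ _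

/-- asymptotic expansion of  for . -/
theorem resolvent_expansion (E : X →L[ℂ] Y) (A : X →ₗ.[ℂ] Y)
    (hdense : Dense (A.domain : Set X)) (hclosed : IsClosed (A.graph : Set (X × Y)))
    (k : ℕ) (x : X) (hx : x ∈ WongSeq E A k) :
    ∃ (xs : Fin k → X) (xk : X) (hxk : xk ∈ A.domain),
      ∀ (z : ℂ) (R : Y →L[ℂ] X), IsResolventAt E A z R → z ≠ 0 →
        R (E x) = z⁻¹ • x + (∑ i : Fin k, (z ^ ((i : ℕ) + 2))⁻¹ • xs i)
          + (z ^ (k + 1))⁻¹ • R (A ⟨xk, hxk⟩) := by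
  clear hdense hclosed
  induction k generalizing x with
  | zero =>
    refine ⟨Fin.elim0, -x, neg_mem hx, ?_⟩
    intro z R hR hz
    have hneg : A ⟨-x, neg_mem hx⟩ = -(A ⟨x, hx⟩) := by
      have : (⟨-x, neg_mem hx⟩ : A.domain) = -⟨x, hx⟩ := rfl
      rw [this]; exact A.toFun.map_neg _
    rw [aux_resolvent E A hR hz x hx, hneg, map_neg]
    simp only [Fin.sum_univ_zero, add_zero, zero_add, pow_one, smul_neg]
    norm_num
    try abel
  | succ k ih =>
    obtain ⟨hxd, w, hw, hEw⟩ := hx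
    obtain ⟨xs, xk, hxk, hmain⟩ := ih w hw
    refine ⟨Fin.cases (-w) (fun i => -xs i), -xk, neg_mem hxk, ?_⟩
    intro z R hR hz
    have hneg : A ⟨-xk, neg_mem hxk⟩ = -(A ⟨xk, hxk⟩) := by
      have : (⟨-xk, neg_mem hxk⟩ : A.domain) = -⟨xk, hxk⟩ := rfl
      rw [this]; exact A.toFun.map_neg _
    have h1 := aux_resolvent E A hR hz x hxd
    rw [← hEw, hmain z R hR hz] at h1
    rw [h1, hneg, map_neg]
    have hsum2 : ∑ i : Fin k, (z⁻¹ * (z ^ ((i : ℕ) + 2))⁻¹) • xs i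
        = ∑ i : Fin k, (z ^ ((i : ℕ) + 1 + 2))⁻¹ • xs i := by
      refine Finset.sum_congr rfl fun i _ => ?_
      congr 1
      rw [← mul_inv, ← pow_succ']
    simp only [Fin.sum_univ_succ, Fin.cases_zero, Fin.cases_succ, Fin.val_succ, Fin.val_zero,
      smul_add, smul_sub, smul_smul, smul_neg, Finset.smul_sum]
    rw [hsum2, show z⁻¹ * z⁻¹ = (z ^ (0 + 2 : ℕ))⁻¹ by rw [← mul_inv]; ring_nf,
      show z⁻¹ * (z ^ (k + 1))⁻¹ = (z ^ (k + 1 + 1))⁻¹ by rw [← mul_inv, ← pow_succ']]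
    simp only [neg_one_smul, Finset.sum_neg_distrib]
    norm_num
    try abel
end

section
/- If ρ(E,A) ≠ ∅, then for each k ∈ ℕ one has A^{-1}[E[closure(IV_k)]] ⊆ closure(IV_{k+1}); i.e., if x ∈ dom(A) and Ax = Ey for some y in the closure of IV_k, then x lies in the closure of IV_{k+1}. -/
open Set Filter Topology MeasureTheory

variable {X Y : Type*} [NormedAddCommGroup X] [NormedSpace ℂ X]
  [NormedAddCommGroup Y] [NormedSpace ℂ Y]

lemma wong_smul_add (E : X →L[ℂ] Y) (A : X →ₗ.[ℂ] Y) (k : ℕ) :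
    ∀ (c : ℂ) (a b : X), a ∈ WongSeq E A k → b ∈ WongSeq E A k →
    c • a + b ∈ WongSeq E A k := by
  induction k with
  | zero =>
    intro c a b ha hb
    exact A.domain.add_mem (A.domain.smul_mem c ha) hb
  | succ k ih =>
    rintro c a b ⟨ha, u, hu, hau⟩ ⟨hb, v, hv, hbv⟩
    refine ⟨A.domain.add_mem (A.domain.smul_mem c ha) hb, c • u + v, ih c u v hu hv, ?_⟩
    have hsub : (⟨c • a + b, A.domain.add_mem (A.domain.smul_mem c ha) hb⟩ : A.domain)
        = c • (⟨a, ha⟩ : A.domain) + (⟨b, hb⟩ : A.domain) := rfl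
    rw [map_add, _root_.map_smul, hsub, A.map_add, A.map_smul, hau, hbv]

lemma wong_antitone (E : X →L[ℂ] Y) (A : X →ₗ.[ℂ] Y) (k : ℕ) :
    WongSeq E A (k + 1) ⊆ WongSeq E A k := by
  induction k with
  | zero => rintro x ⟨hx, _⟩; exact hx
  | succ k ih => rintro x ⟨hx, u, hu, hux⟩; exact ⟨hx, u, ih hu, hux⟩

lemma wong_resolvent_step (E : X →L[ℂ] Y) (A : X →ₗ.[ℂ] Y) {z : ℂ} {R : Y →L[ℂ] X}
    (hR : IsResolventAt E A z R) :
    ∀ k, ∀ v ∈ WongSeq E A k, R (E v) ∈ WongSeq E A (k + 1) := by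
  intro k
  induction k with
  | zero =>
    intro v hv
    obtain ⟨h, heq⟩ := hR.1 (E v)
    have hmem : v - z • R (E v) ∈ WongSeq E A 0 :=
      A.domain.sub_mem hv (A.domain.smul_mem z h)
    refine ⟨h, v - z • R (E v), hmem, ?_⟩
    rw [map_sub, _root_.map_smul]
    exact (eq_sub_of_add_eq' heq).symm
  | succ k ih =>
    intro v hv
    obtain ⟨h, heq⟩ := hR.1 (E v)
    have hw : R (E v) ∈ WongSeq E A (k + 1) := ih v (wong_antitone E A k hv)
    have hmem : v - z • R (E v) ∈ WongSeq E A (k + 1) := by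
      have := wong_smul_add E A (k + 1) (-z) (R (E v)) v hw hv
      have hrw : (-z) • R (E v) + v = v - z • R (E v) := by
        rw [neg_smul]; abel
      rwa [hrw] at this
    refine ⟨h, v - z • R (E v), hmem, ?_⟩
    rw [map_sub, _root_.map_smul]
    exact (eq_sub_of_add_eq' heq).symm

lemma wong_closure_step (E : X →L[ℂ] Y) (A : X →ₗ.[ℂ] Y) {z : ℂ} {R : Y →L[ℂ] X}
    (hR : IsResolventAt E A z R) (k : ℕ)
    {x y : X} (hx : x ∈ A.domain) (hxc : x ∈ closure (WongSeq E A k))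
    (hy : y ∈ closure (WongSeq E A k)) (hxy : A ⟨x, hx⟩ = E y) :
    x ∈ closure (WongSeq E A (k + 1)) := by
  set f : X × X → X := fun p => R (E (z • p.1 + p.2)) with hf
  have hcont : Continuous f := by
    apply R.continuous.comp
    apply E.continuous.comp
    exact (continuous_const.smul continuous_fst).add continuous_snd
  have hfx : f (x, y) = x := by
    have h2 := hR.2 x hx
    simp only [hf]
    rw [map_add, _root_.map_smul, ← hxy]
    exact h2
  have hmaps : (WongSeq E A k) ×ˢ (WongSeq E A k) ⊆ f ⁻¹' (WongSeq E A (k + 1)) := by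
    rintro ⟨a, b⟩ ⟨ha, hb⟩
    exact wong_resolvent_step E A hR k _ (wong_smul_add E A k z a b ha hb)
  have hmem : (x, y) ∈ closure ((WongSeq E A k) ×ˢ (WongSeq E A k)) := by
    rw [closure_prod_eq]; exact ⟨hxc, hy⟩
  have himg : f (x, y) ∈ closure (f '' ((WongSeq E A k) ×ˢ (WongSeq E A k))) :=
    (image_closure_subset_closure_image hcont) ⟨(x, y), hmem, rfl⟩
  rw [hfx] at himg
  exact closure_mono (Set.image_subset_iff.mpr hmaps) himg

theorem preimage_closure_subset_closure (E : X →L[ℂ] Y) (A : X →ₗ.[ℂ] Y)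
    (hdense : Dense (A.domain : Set X)) (hclosed : IsClosed (A.graph : Set (X × Y)))
    (hres : (ResolventSet E A).Nonempty) (k : ℕ)
    (x : X) (hx : x ∈ A.domain) (y : X) (hy : y ∈ closure (WongSeq E A k))
    (hxy : A ⟨x, hx⟩ = E y) :
    x ∈ closure (WongSeq E A (k + 1)) := by
  obtain ⟨z, R, hR⟩ := hres
  induction k generalizing x y with
  | zero => exact wong_closure_step E A hR 0 hx (subset_closure hx) hy hxy
  | succ k ih =>
    have hy' : y ∈ closure (WongSeq E A k) :=
      closure_mono (wong_antitone E A k) hy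
    exact wong_closure_step E A hR (k + 1) hx (ih x hx y hy' hxy) hy hxy
end

section
/- Under the polynomial boundedness hypothesis, with x_n := (nE+A)^{-1} n E x for n ∈ ℕ, n ≥ ρ_0, and x ∈ IV_k with k > ind(E,A), one has x_n ∈ IV_{k+1} and x_n → x as n → ∞. -/
open Set Filter Topology MeasureTheory

variable {X Y : Type*} [NormedAddCommGroup X] [NormedSpace ℂ X]
  [NormedAddCommGroup Y] [NormedSpace ℂ Y]

section Aux

variable (E : X →L[ℂ] Y) (A : X →ₗ.[ℂ] Y)

lemma wong_subset_dom : ∀ k, WongSeq E A k ⊆ (A.domain : Set X)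
  | 0 => subset_rfl
  | _ + 1 => fun _ h => h.1

lemma wong_smul_sub : ∀ k, ∀ (c : ℂ) (x y : X), x ∈ WongSeq E A k → y ∈ WongSeq E A k →
    c • (x - y) ∈ WongSeq E A k
  | 0, c, x, y, hx, hy => A.domain.smul_mem c (A.domain.sub_mem hx hy)
  | k + 1, c, x, y, ⟨hx, wx, hwx, hEx⟩, ⟨hy, wy, hwy, hEy⟩ => by
    refine ⟨A.domain.smul_mem c (A.domain.sub_mem hx hy), c • (wx - wy),
      wong_smul_sub k c wx wy hwx hwy, ?_⟩
    have h1 : (⟨c • (x - y), A.domain.smul_mem c (A.domain.sub_mem hx hy)⟩ : A.domain)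
        = c • ((⟨x, hx⟩ : A.domain) - ⟨y, hy⟩) := rfl
    rw [h1, A.map_smul, A.map_sub, ← hEx, ← hEy, _root_.map_smul, _root_.map_sub]

lemma wong_succ_subset : ∀ k, WongSeq E A (k + 1) ⊆ WongSeq E A k
  | 0 => wong_subset_dom E A 1
  | k + 1 => fun _ h => h.elim fun hx ⟨w, hw, hE⟩ => ⟨hx, w, wong_succ_subset k hw, hE⟩

lemma resolvent_key {z : ℂ} {R : Y →L[ℂ] X} (hRz : IsResolventAt E A z R)
    {x : X} (hx : x ∈ A.domain) : x - R (z • E x) = R (A ⟨x, hx⟩) := by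
  have h := hRz.2 x hx
  rw [map_add] at h
  exact sub_eq_of_eq_add' h.symm

lemma resolvent_mem_wong_succ {z : ℂ} {R : Y →L[ℂ] X} (hRz : IsResolventAt E A z R) :
    ∀ k, ∀ x ∈ WongSeq E A k, R (z • E x) ∈ WongSeq E A (k + 1) := by
  intro k
  induction k with
  | zero =>
    intro x hx
    obtain ⟨hr, hr2⟩ := hRz.1 (z • E x)
    refine ⟨hr, z • (x - R (z • E x)), A.domain.smul_mem z (A.domain.sub_mem hx hr), ?_⟩
    have h3 : A ⟨R (z • E x), hr⟩ = z • E x - z • E (R (z • E x)) :=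
      eq_sub_of_add_eq' hr2
    rw [h3, _root_.map_smul, _root_.map_sub, smul_sub]
  | succ k ih =>
    intro x hx
    have hxk : x ∈ WongSeq E A k := wong_succ_subset E A k hx
    have hrk1 : R (z • E x) ∈ WongSeq E A (k + 1) := ih x hxk
    obtain ⟨hr, hr2⟩ := hRz.1 (z • E x)
    refine ⟨hr, z • (x - R (z • E x)),
      wong_smul_sub E A (k + 1) z x (R (z • E x)) hx hrk1, ?_⟩
    have h3 : A ⟨R (z • E x), hr⟩ = z • E x - z • E (R (z • E x)) :=
      eq_sub_of_add_eq' hr2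
    rw [h3, _root_.map_smul, _root_.map_sub, smul_sub]

lemma resolvent_unique {z : ℂ} {R R' : Y →L[ℂ] X} (h : IsResolventAt E A z R)
    (h' : IsResolventAt E A z R') (y : Y) : R y = R' y := by
  obtain ⟨hd, hy⟩ := h'.1 y
  conv_lhs => rw [← hy]
  exact h.2 (R' y) hd

end Aux

/-- for `x` in `IV k` with `k > ind(E,A)`, the vectors
`x_m := (mE+A)⁻¹ m E x` belong to `IV (k+1)` and converge to `x`. -/
theorem approx_by_resolvent (E : X →L[ℂ] Y) (A : X →ₗ.[ℂ] Y)
    (hdense : Dense (A.domain : Set X)) (hclosed : IsClosed (A.graph : Set (X × Y)))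
    (ρ₀ : ℝ) (n : ℕ) (hn : PolyBoundOrder E A ρ₀ n)
    (hmin : ∀ m : ℕ, PolyBoundOrder E A ρ₀ m → n ≤ m)
    (k : ℕ) (hk : n < k) (x : X) (hx : x ∈ WongSeq E A k)
    (R : ℕ → Y →L[ℂ] X)
    (hR : ∀ m : ℕ, ρ₀ ≤ (m : ℝ) → IsResolventAt E A (m : ℂ) (R m)) :
    (∀ m : ℕ, ρ₀ ≤ (m : ℝ) → R m ((m : ℂ) • E x) ∈ WongSeq E A (k + 1)) ∧
      Filter.Tendsto (fun m : ℕ => R m ((m : ℂ) • E x)) Filter.atTop (nhds x) := by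
  obtain ⟨C, hC0, hC⟩ := hn
  -- pointwise norm bound for R m
  have hbound : ∀ m : ℕ, ρ₀ ≤ (m : ℝ) → ∀ y : Y,
      ‖R m y‖ ≤ C * (m : ℝ) ^ n * ‖y‖ := by
    intro m hm y
    obtain ⟨R', hR', hnorm⟩ := hC (m : ℂ) (by simpa using hm)
    rw [resolvent_unique E A (hR m hm) hR' y]
    calc ‖R' y‖ ≤ ‖R'‖ * ‖y‖ := R'.le_opNorm y
      _ ≤ C * (m : ℝ) ^ n * ‖y‖ := by
        apply mul_le_mul_of_nonneg_right _ (norm_nonneg y)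
        simpa using hnorm
  -- main estimate, by induction on the Wong level
  have key : ∀ j : ℕ, ∀ x ∈ WongSeq E A j, ∃ D : ℝ, 0 ≤ D ∧
      ∀ m : ℕ, ρ₀ ≤ (m : ℝ) → 1 ≤ (m : ℝ) →
        ‖x - R m ((m : ℂ) • E x)‖ ≤ D * (m : ℝ) ^ (max ((n : ℤ) - j) (-1)) := by
    intro j
    induction j with
    | zero =>
      intro x hx
      refine ⟨C * ‖A ⟨x, hx⟩‖, by positivity, fun m hρ h1 => ?_⟩
      rw [resolvent_key E A (hR m hρ) hx]
      have hmax0 : max ((n : ℤ) - ((0 : ℕ) : ℤ)) (-1) = (n : ℤ) := by omega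
      rw [hmax0, zpow_natCast]
      calc ‖R m (A ⟨x, hx⟩)‖ ≤ C * (m : ℝ) ^ n * ‖A ⟨x, hx⟩‖ := hbound m hρ _
        _ = C * ‖A ⟨x, hx⟩‖ * (m : ℝ) ^ n := by ring
    | succ j ih =>
      rintro x ⟨hxd, w, hw, hEw⟩
      obtain ⟨D, hD0, hDb⟩ := ih w hw
      refine ⟨‖w‖ + D, by positivity, fun m hρ h1 => ?_⟩
      have hm0 : (0 : ℝ) < (m : ℝ) := lt_of_lt_of_le zero_lt_one h1
      have hmC : ((m : ℂ)) ≠ 0 := by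
        simpa using (Nat.cast_ne_zero (R := ℂ)).2 (by exact_mod_cast hm0.ne')
      have hkey : x - R m ((m : ℂ) • E x) = R m (E w) := by
        rw [resolvent_key E A (hR m hρ) hxd, hEw]
      have hsmul : R m ((m : ℂ) • E w) = (m : ℂ) • R m (E w) :=
        _root_.map_smul (R m) _ _
      have hEwR : R m (E w) = ((m : ℂ))⁻¹ • R m ((m : ℂ) • E w) := by
        rw [hsmul, smul_smul, inv_mul_cancel₀ hmC, one_smul]
      rw [hkey, hEwR]
      have hnorminv : ‖((m : ℂ))⁻¹‖ = ((m : ℝ))⁻¹ := by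
        rw [norm_inv]; norm_num
      rw [norm_smul, hnorminv]
      have h2 : ‖R m ((m : ℂ) • E w)‖ ≤ ‖w‖ + D * (m : ℝ) ^ (max ((n : ℤ) - j) (-1)) := by
        have : R m ((m : ℂ) • E w) = w - (w - R m ((m : ℂ) • E w)) := by abel
        rw [this]
        calc ‖w - (w - R m ((m : ℂ) • E w))‖
            ≤ ‖w‖ + ‖w - R m ((m : ℂ) • E w)‖ := norm_sub_le _ _
          _ ≤ ‖w‖ + D * (m : ℝ) ^ (max ((n : ℤ) - j) (-1)) := by
              exact add_le_add le_rfl (hDb m hρ h1)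
      have he1 : (-1 : ℤ) ≤ max ((n : ℤ) - ((j + 1 : ℕ) : ℤ)) (-1) := le_max_right _ _
      have he2 : max ((n : ℤ) - (j : ℤ)) (-1) - 1 ≤ max ((n : ℤ) - ((j + 1 : ℕ) : ℤ)) (-1) := by
        push_cast; omega
      calc ((m : ℝ))⁻¹ * ‖R m ((m : ℂ) • E w)‖
          ≤ ((m : ℝ))⁻¹ * (‖w‖ + D * (m : ℝ) ^ (max ((n : ℤ) - j) (-1))) :=
            mul_le_mul_of_nonneg_left h2 (by positivity)
        _ = ‖w‖ * (m : ℝ) ^ (-1 : ℤ) + D * (m : ℝ) ^ (max ((n : ℤ) - j) (-1) - 1) := by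
            rw [zpow_sub₀ hm0.ne', zpow_one, zpow_neg_one]; ring
        _ ≤ ‖w‖ * (m : ℝ) ^ (max ((n : ℤ) - ((j + 1 : ℕ) : ℤ)) (-1))
            + D * (m : ℝ) ^ (max ((n : ℤ) - ((j + 1 : ℕ) : ℤ)) (-1)) :=
            add_le_add
              (mul_le_mul_of_nonneg_left (zpow_le_zpow_right₀ h1 he1) (norm_nonneg w))
              (mul_le_mul_of_nonneg_left (zpow_le_zpow_right₀ h1 he2) hD0)
        _ = (‖w‖ + D) * (m : ℝ) ^ (max ((n : ℤ) - ((j + 1 : ℕ) : ℤ)) (-1)) := by ring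
  constructor
  · intro m hm
    exact resolvent_mem_wong_succ E A (hR m hm) k x hx
  · obtain ⟨D, hD0, hDb⟩ := key k x hx
    have hmax : max ((n : ℤ) - k) (-1) = -1 := by omega
    rw [hmax] at hDb
    have hev : ∀ᶠ m : ℕ in atTop, ‖R m ((m : ℂ) • E x) - x‖ ≤ D * ((m : ℝ))⁻¹ := by
      filter_upwards [eventually_ge_atTop (max 1 ⌈ρ₀⌉₊)] with m hm
      have h1 : (1 : ℝ) ≤ (m : ℝ) := by
        exact_mod_cast le_trans (le_max_left 1 ⌈ρ₀⌉₊) hm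
      have hρ : ρ₀ ≤ (m : ℝ) :=
        le_trans (Nat.le_ceil ρ₀) (by exact_mod_cast le_trans (le_max_right 1 ⌈ρ₀⌉₊) hm)
      have := hDb m hρ h1
      rw [norm_sub_rev]
      simpa [zpow_neg_one] using this
    have hlim : Tendsto (fun m : ℕ => D * ((m : ℝ))⁻¹) atTop (nhds 0) := by
      have : Tendsto (fun m : ℕ => ((m : ℝ))⁻¹) atTop (nhds 0) :=
        tendsto_inv_atTop_zero.comp tendsto_natCast_atTop_atTop
      simpa using this.const_mul D
    have h0 : Tendsto (fun m : ℕ => R m ((m : ℂ) • E x) - x) atTop (nhds 0) :=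
      squeeze_zero_norm' hev hlim
    have h1 := h0.add_const x
    simpa using h1
end

section
/- Under the polynomial resolvent bound, if E restricted to closure(IV_{ind(E,A)+1}) is injective, then the operator C := E^{-1}A with domain V := A^{-1}[E[closure(IV_{ind(E,A)+1})]], viewed as an operator in closure(IV_{ind(E,A)+1}), is well-defined and closed. -/
open Set Filter Topology MeasureTheory

variable {X Y : Type*} [NormedAddCommGroup X] [NormedSpace ℂ X]
  [NormedAddCommGroup Y] [NormedSpace ℂ Y]

/-- if E is injective on closure (IV (ind+1)), the operator
C := E⁻¹A with domain V := A⁻¹[E[closure (IV (ind+1))]] is well-defined and closed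
as an operator in closure (IV (ind+1)). -/
theorem op_C_wellDefined_and_closed (E : X →L[ℂ] Y) (A : X →ₗ.[ℂ] Y)
    (hdense : Dense (A.domain : Set X)) (hclosed : IsClosed (A.graph : Set (X × Y)))
    (ρ₀ : ℝ) (n : ℕ) (hn : PolyBoundOrder E A ρ₀ n)
    (hmin : ∀ m : ℕ, PolyBoundOrder E A ρ₀ m → n ≤ m)
    (hinj : ∀ x ∈ closure (WongSeq E A (n + 1)), E x = 0 → x = 0) :
    (∀ (x : X) (hx : x ∈ A.domain),
        A ⟨x, hx⟩ ∈ E '' closure (WongSeq E A (n + 1)) →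
        ∃! y : X, y ∈ closure (WongSeq E A (n + 1)) ∧ E y = A ⟨x, hx⟩) ∧
    (∀ (xs ys : ℕ → X) (x y : X),
        (∀ m : ℕ, xs m ∈ closure (WongSeq E A (n + 1))) →
        (∀ m : ℕ, ys m ∈ closure (WongSeq E A (n + 1))) →
        (∀ m : ℕ, ∃ h : xs m ∈ A.domain, E (ys m) = A ⟨xs m, h⟩) →
        Filter.Tendsto xs Filter.atTop (nhds x) →
        Filter.Tendsto ys Filter.atTop (nhds y) →
        ∃ h : x ∈ A.domain, E y = A ⟨x, h⟩) := by
  have hS : ∀ k : ℕ, ∃ S : Submodule ℂ X, (S : Set X) = WongSeq E A k := by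
    intro k
    induction k with
    | zero => exact ⟨A.domain, rfl⟩
    | succ k ih =>
      obtain ⟨S, hSk⟩ := ih
      refine ⟨{ carrier := WongSeq E A (k+1)
                add_mem' := ?_
                zero_mem' := ?_
                smul_mem' := ?_ }, rfl⟩
      · rintro a b ⟨ha, w1, hw1, he1⟩ ⟨hb, w2, hw2, he2⟩
        refine ⟨A.domain.add_mem ha hb, w1 + w2, ?_, ?_⟩
        · rw [← hSk] at hw1 hw2 ⊢; exact S.add_mem hw1 hw2
        · have : A ⟨a + b, A.domain.add_mem ha hb⟩ = A ⟨a, ha⟩ + A ⟨b, hb⟩ :=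
            A.map_add ⟨a, ha⟩ ⟨b, hb⟩
          rw [map_add, this, he1, he2]
      · refine ⟨A.domain.zero_mem, 0, by rw [← hSk]; exact S.zero_mem, ?_⟩
        rw [map_zero]
        exact (A.map_zero).symm
      · rintro c a ⟨ha, w, hw, he⟩
        refine ⟨A.domain.smul_mem c ha, c • w, ?_, ?_⟩
        · rw [← hSk] at hw ⊢; exact S.smul_mem c hw
        · have h2 : A ⟨c • a, A.domain.smul_mem c ha⟩ = c • A ⟨a, ha⟩ :=
            A.map_smul c ⟨a, ha⟩
          rw [show E (c • w) = c • E w from E.map_smul c w, h2, he]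
  obtain ⟨S, hSeq⟩ := hS (n + 1)
  have hsubmem : ∀ a b : X, a ∈ closure (WongSeq E A (n + 1)) →
      b ∈ closure (WongSeq E A (n + 1)) → a - b ∈ closure (WongSeq E A (n + 1)) := by
    intro a b ha hb
    rw [← hSeq] at ha hb ⊢
    exact S.topologicalClosure.sub_mem ha hb
  constructor
  · intro x hx hmem
    obtain ⟨y, hy, hey⟩ := hmem
    refine ⟨y, ⟨hy, hey⟩, ?_⟩
    rintro z ⟨hz, hez⟩
    have h0 : E (z - y) = 0 := by rw [map_sub, hez, hey, sub_self]
    exact sub_eq_zero.mp (hinj _ (hsubmem z y hz hy) h0)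
  · intro xs ys x y hxs hys hrel hx hy
    have hg : ∀ m, (xs m, E (ys m)) ∈ A.graph := by
      intro m
      obtain ⟨h, he⟩ := hrel m
      rw [A.mem_graph_iff]
      exact ⟨⟨xs m, h⟩, rfl, he.symm⟩
    have htend : Filter.Tendsto (fun m => (xs m, E (ys m))) Filter.atTop (nhds (x, E y)) :=
      hx.prodMk_nhds ((E.continuous.tendsto y).comp hy)
    have hmem : (x, E y) ∈ A.graph :=
      hclosed.mem_of_tendsto htend (Filter.Eventually.of_forall hg)
    rw [A.mem_graph_iff] at hmem
    obtain ⟨⟨x', hx'⟩, h1, h2⟩ := hmem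
    simp only at h1 h2
    subst h1
    exact ⟨hx', h2.symm⟩
end

section
/- Under the polynomial resolvent bound hypothesis, the restriction of E to IV_{ind(E,A)+1} is always injective: if x ∈ IV_{ind(E,A)+1} and Ex = 0, then x = 0. -/
open Set Filter Topology MeasureTheory

variable {X Y : Type*} [NormedAddCommGroup X] [NormedSpace ℂ X]
  [NormedAddCommGroup Y] [NormedSpace ℂ Y]

lemma resolvent_apply_E (E : X →L[ℂ] Y) (A : X →ₗ.[ℂ] Y) {z : ℂ} {R : Y →L[ℂ] X}
    (hR : IsResolventAt E A z R) {x : X} (hx : x ∈ A.domain) :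
    z • R (E x) + R (A ⟨x, hx⟩) = x := by
  have h := hR.2 x hx
  rwa [map_add, ContinuousLinearMap.map_smul] at h

lemma wong_bound (E : X →L[ℂ] Y) (A : X →ₗ.[ℂ] Y) :
    ∀ m : ℕ, ∀ x : X, x ∈ WongSeq E A m → ∃ M : ℝ, 0 ≤ M ∧
      ∀ z : ℂ, ∀ R : Y →L[ℂ] X, IsResolventAt E A z R → 1 ≤ ‖z‖ →
        ‖R (E x)‖ ≤ M / ‖z‖ + ‖R‖ * M / ‖z‖ ^ (m + 1) := by
  intro m
  induction m with
  | zero =>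
    intro x hx
    refine ⟨‖x‖ + ‖A ⟨x, hx⟩‖, by positivity, ?_⟩
    intro z R hR hz
    have hz0 : (0:ℝ) < ‖z‖ := lt_of_lt_of_le one_pos hz
    have h1 : z • R (E x) = x - R (A ⟨x, hx⟩) :=
      eq_sub_of_add_eq (resolvent_apply_E E A hR hx)
    have h2 : ‖z‖ * ‖R (E x)‖ ≤ ‖x‖ + ‖R‖ * ‖A ⟨x, hx⟩‖ := by
      calc ‖z‖ * ‖R (E x)‖ = ‖z • R (E x)‖ := (norm_smul z _).symm
        _ = ‖x - R (A ⟨x, hx⟩)‖ := by rw [h1]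
        _ ≤ ‖x‖ + ‖R (A ⟨x, hx⟩)‖ := norm_sub_le _ _
        _ ≤ ‖x‖ + ‖R‖ * ‖A ⟨x, hx⟩‖ := by gcongr; exact R.le_opNorm _
    have h3 : ‖R (E x)‖ ≤ (‖x‖ + ‖R‖ * ‖A ⟨x, hx⟩‖) / ‖z‖ := by
      rw [le_div_iff₀ hz0, mul_comm]; exact h2
    have hR0 : (0:ℝ) ≤ ‖R‖ := norm_nonneg R
    calc ‖R (E x)‖ ≤ (‖x‖ + ‖R‖ * ‖A ⟨x, hx⟩‖) / ‖z‖ := h3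
      _ = ‖x‖ / ‖z‖ + ‖R‖ * ‖A ⟨x, hx⟩‖ / ‖z‖ := add_div _ _ _
      _ ≤ (‖x‖ + ‖A ⟨x, hx⟩‖) / ‖z‖ + ‖R‖ * (‖x‖ + ‖A ⟨x, hx⟩‖) / ‖z‖ ^ (0 + 1) := by
          rw [pow_one]
          gcongr <;> [skip; skip] <;> linarith [norm_nonneg x, norm_nonneg (A ⟨x, hx⟩)]
  | succ m ih =>
    intro x hx
    obtain ⟨hxd, x', hx', hEx'⟩ := hx
    obtain ⟨M', hM', hb'⟩ := ih x' hx'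
    refine ⟨‖x‖ + M', by positivity, ?_⟩
    intro z R hR hz
    have hz0 : (0:ℝ) < ‖z‖ := lt_of_lt_of_le one_pos hz
    have h1 : z • R (E x) = x - R (E x') := by
      rw [hEx']
      exact eq_sub_of_add_eq (resolvent_apply_E E A hR hxd)
    have hb := hb' z R hR hz
    have h2 : ‖z‖ * ‖R (E x)‖ ≤ ‖x‖ + (M' / ‖z‖ + ‖R‖ * M' / ‖z‖ ^ (m + 1)) := by
      calc ‖z‖ * ‖R (E x)‖ = ‖z • R (E x)‖ := (norm_smul z _).symm
        _ = ‖x - R (E x')‖ := by rw [h1]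
        _ ≤ ‖x‖ + ‖R (E x')‖ := norm_sub_le _ _
        _ ≤ ‖x‖ + (M' / ‖z‖ + ‖R‖ * M' / ‖z‖ ^ (m + 1)) := by gcongr
    have h3 : ‖R (E x)‖ ≤ (‖x‖ + (M' / ‖z‖ + ‖R‖ * M' / ‖z‖ ^ (m + 1))) / ‖z‖ := by
      rw [le_div_iff₀ hz0, mul_comm]; exact h2
    have hR0 : (0:ℝ) ≤ ‖R‖ := norm_nonneg R
    have hx0 : (0:ℝ) ≤ ‖x‖ := norm_nonneg x
    have hzm : (0:ℝ) < ‖z‖ ^ (m + 1) := pow_pos hz0 _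
    refine h3.trans ?_
    rw [add_div, add_div, div_div, div_div, ← pow_succ]
    have e1 : ‖x‖ / ‖z‖ + M' / (‖z‖ * ‖z‖) ≤ (‖x‖ + M') / ‖z‖ := by
      rw [add_div]
      gcongr
      nlinarith
    have e2 : ‖R‖ * M' / ‖z‖ ^ (m + 1 + 1) ≤ ‖R‖ * (‖x‖ + M') / ‖z‖ ^ (m + 1 + 1) := by
      gcongr; linarith
    calc ‖x‖ / ‖z‖ + (M' / (‖z‖ * ‖z‖) + ‖R‖ * M' / ‖z‖ ^ (m + 1 + 1))
        = (‖x‖ / ‖z‖ + M' / (‖z‖ * ‖z‖)) + ‖R‖ * M' / ‖z‖ ^ (m + 1 + 1) := by ring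
      _ ≤ (‖x‖ + M') / ‖z‖ + ‖R‖ * (‖x‖ + M') / ‖z‖ ^ (m + 1 + 1) := add_le_add e1 e2

/-- under the polynomial resolvent bound, E restricted to
IV (ind(E,A)+1) is injective. -/
theorem E_injective_on_wongSeq (E : X →L[ℂ] Y) (A : X →ₗ.[ℂ] Y)
    (hdense : Dense (A.domain : Set X)) (hclosed : IsClosed (A.graph : Set (X × Y)))
    (ρ₀ : ℝ) (n : ℕ) (hn : PolyBoundOrder E A ρ₀ n)
    (hmin : ∀ m : ℕ, PolyBoundOrder E A ρ₀ m → n ≤ m)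
    (x : X) (hx : x ∈ WongSeq E A (n + 1)) (hEx : E x = 0) : x = 0 := by
  obtain ⟨hdom, x', hx', hEx'⟩ := hx
  obtain ⟨M, hM, hbound⟩ := wong_bound E A n x' hx'
  obtain ⟨C, hC, hres⟩ := hn
  have key : ∀ t : ℝ, max ρ₀ 1 ≤ t → ‖x‖ ≤ (M + C * M) / t := by
    intro t ht
    have ht1 : (1:ℝ) ≤ t := le_trans (le_max_right _ _) ht
    have ht0 : (0:ℝ) < t := lt_of_lt_of_le one_pos ht1
    have htρ : ρ₀ ≤ ((t : ℂ)).re := by simpa using le_trans (le_max_left _ _) ht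
    obtain ⟨R, hR, hRn⟩ := hres (t : ℂ) htρ
    have hzn : ‖(t : ℂ)‖ = t := by
      rw [Complex.norm_real]; exact abs_of_pos ht0
    have h0 : R (E x') = x := by
      rw [hEx']
      have := hR.2 x hdom
      rwa [hEx, smul_zero, zero_add] at this
    have hb := hbound (t : ℂ) R hR (by rw [hzn]; exact ht1)
    rw [h0, hzn] at hb
    rw [hzn] at hRn
    have h2 : ‖R‖ * M / t ^ (n + 1) ≤ C * M / t := by
      calc ‖R‖ * M / t ^ (n + 1) ≤ C * t ^ n * M / t ^ (n + 1) := by gcongr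
        _ = C * M / t := by rw [pow_succ]; field_simp
    calc ‖x‖ ≤ M / t + ‖R‖ * M / t ^ (n + 1) := hb
      _ ≤ M / t + C * M / t := by linarith
      _ = (M + C * M) / t := by rw [add_div]
  have hT : Tendsto (fun t : ℝ => (M + C * M) / t) atTop (𝓝 0) :=
    tendsto_const_nhds.div_atTop tendsto_id
  have hxle : ‖x‖ ≤ 0 := ge_of_tendsto hT (eventually_atTop.2 ⟨max ρ₀ 1, key⟩)
  exact norm_le_zero_iff.mp hxle
end

section
/- Let E, A ∈ L(X;Y) be bounded with ind(E,A) = 0 (i.e. (zE+A)^{-1} is uniformly bounded on a right half-plane {Re z ≥ ρ_0}). Then E is injective on closure(IV_1). More precisely, for every x ∈ closure(IV_1), (nE+A)^{-1}nEx → x as n → ∞; hence Ex = 0 implies x = 0. -/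
open Set Filter Topology MeasureTheory

variable {X Y : Type*} [NormedAddCommGroup X] [NormedSpace ℂ X]
  [NormedAddCommGroup Y] [NormedSpace ℂ Y]

/-- for bounded E, A with ind(E,A) = 0 (uniformly bounded resolvent on a
right half-plane), E is injective on closure (IV 1); more precisely
(nE+A)⁻¹ n E x → x for every x in closure (IV 1). Here IV 1 = A⁻¹[E[X]]. -/
theorem E_injective_on_closure_of_index_zero
    (E A : X →L[ℂ] Y) (ρ₀ M : ℝ)
    (hres : ∀ z : ℂ, ρ₀ ≤ z.re → ∃ R : Y →L[ℂ] X,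
      (∀ y : Y, z • E (R y) + A (R y) = y) ∧ (∀ x : X, R (z • E x + A x) = x) ∧ ‖R‖ ≤ M)
    (x : X) (hx : x ∈ closure {w : X | ∃ v : X, A w = E v}) :
    (∀ R : ℕ → Y →L[ℂ] X,
      (∀ m : ℕ, ρ₀ ≤ (m : ℝ) →
        (∀ y : Y, (m : ℂ) • E (R m y) + A (R m y) = y) ∧
        (∀ w : X, R m ((m : ℂ) • E w + A w) = w)) →
      Filter.Tendsto (fun m : ℕ => R m ((m : ℂ) • E x)) Filter.atTop (nhds x)) ∧
    (E x = 0 → x = 0) := by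
  classical
  have hM : 0 ≤ M := by
    obtain ⟨R₀, -, -, h3⟩ := hres ρ₀ (by simp)
    exact le_trans (norm_nonneg _) h3
  have key : ∀ R : ℕ → Y →L[ℂ] X,
      (∀ m : ℕ, ρ₀ ≤ (m : ℝ) →
        (∀ y : Y, (m : ℂ) • E (R m y) + A (R m y) = y) ∧
        (∀ w : X, R m ((m : ℂ) • E w + A w) = w)) →
      Filter.Tendsto (fun m : ℕ => R m ((m : ℂ) • E x)) Filter.atTop (nhds x) := by
    intro R hR
    have hbound : ∀ m : ℕ, ρ₀ ≤ (m : ℝ) → ‖R m‖ ≤ M := by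
      intro m hm
      obtain ⟨R', h1, h2, h3⟩ := hres (m : ℂ) (by simpa using hm)
      have hEq : R m = R' := by
        ext y
        conv_lhs => rw [← h1 y]
        exact (hR m hm).2 (R' y)
      rw [hEq]; exact h3
    have hsplit : ∀ m : ℕ, ρ₀ ≤ (m : ℝ) → R m ((m : ℂ) • E x) = x - R m (A x) := by
      intro m hm
      have h := (hR m hm).2 x
      rw [map_add] at h
      exact eq_sub_of_add_eq h
    have h0 : Tendsto (fun m : ℕ => R m (A x)) atTop (nhds (0 : X)) := by
      rw [NormedAddCommGroup.tendsto_nhds_zero]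
      intro ε hε
      set B : ℝ := M * ‖A‖ with hB
      have hB0 : 0 ≤ B := mul_nonneg hM (norm_nonneg _)
      set δ : ℝ := ε / (2 * (B + 1)) with hδdef
      have hδ : 0 < δ := div_pos hε (by linarith)
      have hδε : δ * (2 * (B + 1)) = ε := by
        rw [hδdef]; exact div_mul_cancel₀ ε (ne_of_gt (by linarith))
      obtain ⟨w, hwS, hw⟩ := Metric.mem_closure_iff.mp hx δ hδ
      obtain ⟨v, hwv⟩ := hwS
      set C : ℝ := ‖v‖ + M * (‖A‖ * ‖v‖) with hC
      have hAw : ∀ m : ℕ, ρ₀ ≤ (m : ℝ) → 1 ≤ (m : ℝ) → ‖R m (A w)‖ ≤ C / m := by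
        intro m hm h1m
        have hmne : (m : ℂ) ≠ 0 := by
          exact_mod_cast Nat.cast_ne_zero.mpr (by exact_mod_cast Nat.one_le_iff_ne_zero.mp (by exact_mod_cast h1m))
        have h := (hR m hm).2 v
        rw [map_add, _root_.map_smul] at h
        have hEv : R m (E v) = ((m : ℂ))⁻¹ • (v - R m (A v)) := by
          have h2 : (m : ℂ) • R m (E v) = v - R m (A v) := eq_sub_of_add_eq h
          rw [← h2, smul_smul, inv_mul_cancel₀ hmne, one_smul]
        have hAv : ‖R m (A v)‖ ≤ M * (‖A‖ * ‖v‖) := by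
          calc ‖R m (A v)‖ ≤ ‖R m‖ * ‖A v‖ := (R m).le_opNorm _
            _ ≤ M * (‖A‖ * ‖v‖) :=
              mul_le_mul (hbound m hm) (A.le_opNorm v) (norm_nonneg _) hM
        have : ‖R m (E v)‖ ≤ C / m := by
          rw [hEv, norm_smul]
          have hmnorm : ‖((m : ℂ))⁻¹‖ = (m : ℝ)⁻¹ := by
            rw [norm_inv]; norm_cast
          rw [hmnorm, div_eq_inv_mul]
          have hnum : ‖v - R m (A v)‖ ≤ C := by
            calc ‖v - R m (A v)‖ ≤ ‖v‖ + ‖R m (A v)‖ := norm_sub_le _ _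
              _ ≤ C := by rw [hC]; linarith
          exact mul_le_mul_of_nonneg_left hnum (by positivity)
        rwa [hwv]
      have hclose : ∀ m : ℕ, ρ₀ ≤ (m : ℝ) → ‖R m (A (x - w))‖ ≤ B * dist x w := by
        intro m hm
        calc ‖R m (A (x - w))‖ ≤ ‖R m‖ * ‖A (x - w)‖ := (R m).le_opNorm _
          _ ≤ M * (‖A‖ * ‖x - w‖) :=
            mul_le_mul (hbound m hm) (A.le_opNorm _) (norm_nonneg _) hM
          _ = B * dist x w := by rw [hB, dist_eq_norm, mul_assoc]
      have hCd : Tendsto (fun m : ℕ => C / (m : ℝ)) atTop (nhds 0) :=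
        tendsto_const_div_atTop_nhds_zero_nat C
      have hCev : ∀ᶠ m : ℕ in atTop, C / (m : ℝ) < ε / 2 :=
        hCd.eventually_lt_const (half_pos hε)
      have hρev : ∀ᶠ m : ℕ in atTop, ρ₀ ≤ (m : ℝ) :=
        tendsto_natCast_atTop_atTop.eventually_ge_atTop ρ₀
      have h1ev : ∀ᶠ m : ℕ in atTop, (1 : ℝ) ≤ (m : ℝ) :=
        tendsto_natCast_atTop_atTop.eventually_ge_atTop 1
      filter_upwards [hCev, hρev, h1ev] with m hCm hρm h1m
      have hxw : R m (A x) = R m (A w) + R m (A (x - w)) := by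
        have hx' : x = w + (x - w) := by abel
        rw [← map_add, ← map_add, ← hx']
      have hb1 := hAw m hρm h1m
      have hb2 := hclose m hρm
      have htri : ‖R m (A x)‖ ≤ ‖R m (A w)‖ + ‖R m (A (x - w))‖ := by
        rw [hxw]; exact norm_add_le _ _
      have hBd : B * dist x w ≤ ε / 2 := by
        have h1 : B * dist x w ≤ B * δ := mul_le_mul_of_nonneg_left (le_of_lt hw) hB0
        nlinarith [hδ.le]
      linarith
    have hxsub : Tendsto (fun m : ℕ => x - R m (A x)) atTop (nhds x) := by
      have h := Filter.Tendsto.sub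
        (tendsto_const_nhds : Tendsto (fun _ : ℕ => x) atTop (nhds x)) h0
      simpa using h
    have hρev' : ∀ᶠ m : ℕ in atTop, ρ₀ ≤ (m : ℝ) :=
      tendsto_natCast_atTop_atTop.eventually_ge_atTop ρ₀
    exact hxsub.congr' (hρev'.mono fun m hm => (hsplit m hm).symm)
  exact ⟨key, fun hEx => by
    obtain ⟨Rfun, hRfun⟩ : ∃ R : ℕ → Y →L[ℂ] X,
        ∀ m : ℕ, ρ₀ ≤ (m : ℝ) →
          (∀ y : Y, (m : ℂ) • E (R m y) + A (R m y) = y) ∧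
          (∀ w : X, R m ((m : ℂ) • E w + A w) = w) := by
      refine ⟨fun m => if h : ρ₀ ≤ (m : ℝ) then (hres (m : ℂ) (by simpa using h)).choose else 0, ?_⟩
      intro m hm
      obtain ⟨h1, h2, -⟩ := (hres (m : ℂ) (by simpa using hm)).choose_spec
      simp only [dif_pos hm]
      exact ⟨h1, h2⟩
    have ht := key Rfun hRfun
    have hconst : (fun m : ℕ => Rfun m ((m : ℂ) • E x)) = fun _ => (0 : X) := by
      funext m; rw [hEx, smul_zero, map_zero]
    rw [hconst] at ht
    exact (tendsto_nhds_unique ht tendsto_const_nhds)⟩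
end
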